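/- Let (Q,I) be a special biserial bound quiver and suppose u - λv ∈ I is a binomial relation from x to y with x ≠ y, where u starts with a simple cycle a at x and u, v share at least one arrow. Then there exist a path p from x to y and a nontrivial cycle b at y such that u = ap and v = pb. -/

import Mathlib

open Classical

noncomputable section

/-- A finite quiver: finite sets of vertices and arrows with source and target maps. -/
structure FQuiver where
  V : Type
  A : Type
  [fintV : Fintype V]
  [decV : DecidableEq V]
  [fintA : Fintype A]
  [decA : DecidableEq A]
  src : A → V
  tgt : A → V

attribute [instance] FQuiver.fintV FQuiver.decV FQuiver.fintA FQuiver.decA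

namespace FQuiver

variable {Q : FQuiver}

/-- Oriented paths in a quiver. -/
inductive Path (Q : FQuiver) : Q.V → Q.V → Type
  | nil (v : Q.V) : Path Q v v
  | cons (a : Q.A) {w : Q.V} (p : Path Q (Q.tgt a) w) : Path Q (Q.src a) w

/-- Composition (concatenation) of paths. -/
def Path.comp : ∀ {u v w : Q.V}, Path Q u v → Path Q v w → Path Q u w
  | _, _, _, .nil _, q => q
  | _, _, _, .cons a p, q => .cons a (Path.comp p q)

/-- Length of a path. -/
def Path.length : ∀ {u v : Q.V}, Path Q u v → ℕ
  | _, _, .nil _ => 0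
  | _, _, .cons _ p => Path.length p + 1

/-- The list of arrows of a path, in order. -/
def Path.arrows : ∀ {u v : Q.V}, Path Q u v → List Q.A
  | _, _, .nil _ => []
  | _, _, .cons a p => a :: Path.arrows p

/-- An arrow regarded as a path of length one. -/
def arrow (Q : FQuiver) (a : Q.A) : Path Q (Q.src a) (Q.tgt a) := .cons a (.nil _)

/-- Power of an oriented cycle. -/
def Path.pow {x : Q.V} (c : Path Q x x) : ℕ → Path Q x x
  | 0 => .nil x
  | n + 1 => c.comp (Path.pow c n)

/-- Transport a path along equalities of its endpoints. -/
def Path.cast {u u' v v' : Q.V} (hu : u = u') (hv : v = v') (p : Path Q u v) :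
    Path Q u' v' := by subst hu; subst hv; exact p

/-- The length-two path `ab` formed by two composable arrows. -/
def comp2 (a b : Q.A) (h : Q.src b = Q.tgt a) : Path Q (Q.src a) (Q.tgt b) :=
  (arrow Q a).comp ((arrow Q b).cast h rfl)

/-- The set of all paths of a quiver, bundled with their endpoints. -/
def PathsSigma (Q : FQuiver) : Type := Σ (u : Q.V) (v : Q.V), Path Q u v

/-- The underlying vector space of the path algebra `kQ`: the free `k`-module on paths. -/
abbrev PAlg (k : Type) [Field k] (Q : FQuiver) : Type := PathsSigma Q →₀ k

/-- The basis vector of `kQ` corresponding to a path. -/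
def pvec (k : Type) [Field k] {u v : Q.V} (p : Path Q u v) : PAlg k Q :=
  Finsupp.single ⟨u, v, p⟩ 1

/-- Left multiplication of an element of `kQ` by a path. -/
def lmul (k : Type) [Field k] {u v : Q.V} (p : Path Q u v) (x : PAlg k Q) : PAlg k Q :=
  x.sum fun s c => if h : s.1 = v then c • pvec k (p.comp ((Sigma.snd (Sigma.snd s)).cast h rfl)) else 0

/-- Right multiplication of an element of `kQ` by a path. -/
def rmul (k : Type) [Field k] {u v : Q.V} (x : PAlg k Q) (p : Path Q u v) : PAlg k Q :=
  x.sum fun s c => if h : s.2.1 = u then c • pvec k (Path.comp ((Sigma.snd (Sigma.snd s)).cast rfl h) p) else 0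

/-- The two-sided ideal of `kQ` generated by a set of elements. -/
def idealGen (k : Type) [Field k] (Q : FQuiver) (s : Set (PAlg k Q)) : Submodule k (PAlg k Q) :=
  sInf {M : Submodule k (PAlg k Q) |
    s ⊆ (M : Set (PAlg k Q)) ∧
    ∀ (u v : Q.V) (p : Path Q u v) (x : PAlg k Q), x ∈ M → lmul k p x ∈ M ∧ rmul k x p ∈ M}

/-- An admissible (two-sided) ideal `(kQ⁺)ᵐ ⊆ I ⊆ (kQ⁺)²` of the path algebra. -/
structure AdmissibleIdeal (k : Type) [Field k] (Q : FQuiver) where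
  I : Submodule k (PAlg k Q)
  lmul_mem : ∀ {u v : Q.V} (p : Path Q u v) {x : PAlg k Q}, x ∈ I → lmul k p x ∈ I
  rmul_mem : ∀ {u v : Q.V} (p : Path Q u v) {x : PAlg k Q}, x ∈ I → rmul k x p ∈ I
  bound : ℕ
  two_le_bound : 2 ≤ bound
  pow_le : ∀ {u v : Q.V} (p : Path Q u v), bound ≤ p.length → pvec k p ∈ I
  le_sq : ∀ x ∈ I, ∀ s ∈ x.support, 2 ≤ (Sigma.snd (Sigma.snd s)).length

/-- A special biserial bound quiver `(Q, I)`. -/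
structure SpecialBiserial (k : Type) [Field k] (Q : FQuiver) extends AdmissibleIdeal k Q where
  src_card : ∀ v : Q.V, Fintype.card {a : Q.A // Q.src a = v} ≤ 2
  tgt_card : ∀ v : Q.V, Fintype.card {a : Q.A // Q.tgt a = v} ≤ 2
  unique_succ : ∀ (a b c : Q.A) (hb : Q.src b = Q.tgt a) (hc : Q.src c = Q.tgt a),
      pvec k (comp2 a b hb) ∉ I → pvec k (comp2 a c hc) ∉ I → b = c
  unique_pred : ∀ (a b c : Q.A) (hb : Q.tgt b = Q.src a) (hc : Q.tgt c = Q.src a),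
      pvec k (comp2 b a hb.symm) ∉ I → pvec k (comp2 c a hc.symm) ∉ I → b = c

/-- A binomial relation `u - λv ∈ I` between distinct parallel paths not in `I`. -/
structure BinRel {k : Type} [Field k] {Q : FQuiver} (J : AdmissibleIdeal k Q) where
  s : Q.V
  t : Q.V
  u : Path Q s t
  v : Path Q s t
  coef : k
  coef_ne : coef ≠ 0
  u_ne_v : u ≠ v
  u_not_mem : pvec k u ∉ J.I
  v_not_mem : pvec k v ∉ J.I
  rel_mem : pvec k u - coef • pvec k v ∈ J.I

/-- `I` is generated by a set of paths (monomial relations) together with the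
binomial relations in `R`. -/
def Generates {k : Type} [Field k] {Q : FQuiver} (J : AdmissibleIdeal k Q)
    (R : Set (BinRel J)) : Prop :=
  ∃ P : Set (PathsSigma Q),
    (∀ s ∈ P, pvec k (Sigma.snd (Sigma.snd s)) ∈ J.I) ∧
    J.I = idealGen k Q
      (((fun s : PathsSigma Q => pvec k (Sigma.snd (Sigma.snd s))) '' P) ∪
       ((fun r : BinRel J => pvec k r.u - r.coef • pvec k r.v) '' R))

/-- The ideal `S ⊆ A = kQ/I`: the span of the residue classes of the paths occurring
in the binomial relations of `R`. -/
def Smod {k : Type} [Field k] {Q : FQuiver} (J : AdmissibleIdeal k Q) (R : Set (BinRel J)) :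
    Submodule k (PAlg k Q ⧸ J.I) :=
  Submodule.span k
    ((fun r : BinRel J => (Submodule.Quotient.mk (pvec k r.u) : PAlg k Q ⧸ J.I)) '' R)

/-- Number of connected components of the underlying graph of `Q`. -/
def numComponents (Q : FQuiver) : ℕ :=
  Nat.card (Quot (fun u v : Q.V => ∃ a : Q.A, Q.src a = u ∧ Q.tgt a = v))

/-- A quiver is acyclic (triangular) if it has no nontrivial oriented cycle. -/
def Acyclic (Q : FQuiver) : Prop := ∀ (x : Q.V) (p : Path Q x x), p.length = 0

/-- A simple cycle: a nontrivial oriented cycle visiting no vertex twice. -/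
def IsSimpleCycle {x : Q.V} (p : Path Q x x) : Prop :=
  p.length ≠ 0 ∧ (p.arrows.map Q.src).Nodup

/-- `dim_k S = χ(Q)`, written additively: `dim S + |Q₀| = |Q₁| + N`. -/
def EulerEq {k : Type} [Field k] {Q : FQuiver} (J : AdmissibleIdeal k Q)
    (R : Set (BinRel J)) : Prop :=
  Module.finrank k ↥(Smod J R) + Fintype.card Q.V = Fintype.card Q.A + numComponents Q

/-- The word in the free group on the arrows determined by a path. -/
def pathWord (Q : FQuiver) {u v : Q.V} (p : Path Q u v) : FreeGroup Q.A :=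
  (p.arrows.map FreeGroup.of).prod

/-- `T` is a spanning tree of (the underlying graph of) `Q`. -/
def IsSpanningTree (Q : FQuiver) (T : Set Q.A) : Prop :=
  (∀ u v : Q.V,
      Quot.mk (fun a b : Q.V => ∃ e ∈ T, Q.src e = a ∧ Q.tgt e = b) u =
      Quot.mk (fun a b : Q.V => ∃ e ∈ T, Q.src e = a ∧ Q.tgt e = b) v) ∧
  Nat.card T + 1 = Fintype.card Q.V

/-- The fundamental group of the bound quiver `(Q, I)` (for connected `Q`,
with respect to a spanning tree `T`): the free group on the arrows modulo the
tree arrows and the homotopy relations coming from the binomial relations. -/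
abbrev pi1 {k : Type} [Field k] {Q : FQuiver} (J : AdmissibleIdeal k Q)
    (T : Set Q.A) (R : Set (BinRel J)) : Type :=
  FreeGroup Q.A ⧸ Subgroup.normalClosure
    ((FreeGroup.of '' T) ∪
     ((fun r : BinRel J => pathWord Q r.u * (pathWord Q r.v)⁻¹) '' R))

end FQuiver

/-!
A path outside `I` is *good*: each pair of consecutive arrows in it forms a path of length two
outside `I`. In a special biserial bound quiver an arrow has at most one good successor and at
most one good predecessor. So two good paths with the same first arrow are prefix-comparable,
and two with the same last arrow are suffix-comparable. A binomial relation never links `u` with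
`w u r` for cycles `w, r` that are not both trivial: iterating it would make `u` a multiple of
arbitrarily long paths modulo `I`, and those paths lie in `I`. In particular `u` and `v` start
with different arrows.

Write `u = a p`. The first arrow of `p` leaves `x`, so it is either the first arrow `α` of `a` or
the first arrow `β` of `v`. If it is `β`, then `p` and `v` are prefix-comparable, and the previous
remark leaves only `v = p b` with `b` nontrivial. If it is `α`, then every power of `a` is good, so
the good path `u` winds around `a` and the shared arrow `e` lies on `a`. Comparing `v`, up to `e`,
with a long winding around `a` that ends in `e` puts `β` on `a`, and `β = α` because `a` is simple.
-/

namespace List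

variable {α : Type*} {R : α → α → Prop}

theorem IsChain.prefix_of_head?_eq (hR : Relator.RightUnique R) :
    ∀ {l₁ l₂ : List α}, l₁.IsChain R → l₂.IsChain R → l₁.head? = l₂.head? →
      l₁.length ≤ l₂.length → l₁ <+: l₂
  | [], _, _, _, _, _ => nil_prefix
  | [_], _ :: _, _, _, h, _ => by
    obtain rfl := Option.some.inj h
    exact cons_prefix_cons.2 ⟨rfl, nil_prefix⟩
  | _ :: _ :: _, _ :: _ :: _, h₁, h₂, h, hlen => by
    obtain rfl := Option.some.inj h
    rw [isChain_cons_cons] at h₁ h₂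
    obtain rfl := hR h₁.1 h₂.1
    exact cons_prefix_cons.2 ⟨rfl, prefix_of_head?_eq hR h₁.2 h₂.2 rfl (by simpa using hlen)⟩
  | _ :: _ :: _, [_], _, _, _, hlen => by simp at hlen
  | _ :: _, [], _, _, h, _ => by simp at h

theorem IsChain.suffix_of_getLast?_eq (hR : Relator.LeftUnique R)
    {l₁ l₂ : List α} (h₁ : l₁.IsChain R) (h₂ : l₂.IsChain R) (h : l₁.getLast? = l₂.getLast?)
    (hlen : l₁.length ≤ l₂.length) : l₁ <:+ l₂ := by
  rw [← reverse_prefix]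
  refine prefix_of_head?_eq (R := fun a b => R b a) (fun _ _ _ hb hc => hR hb hc) ?_ ?_ ?_
    (by simpa using hlen)
  · exact isChain_reverse.2 h₁
  · exact isChain_reverse.2 h₂
  · simpa using h

end List

namespace FQuiver

variable {Q : FQuiver}

namespace Path

@[simp] theorem nil_comp {u v : Q.V} (p : Path Q u v) : (nil u).comp p = p := rfl

@[simp] theorem comp_nil : ∀ {u v : Q.V} (p : Path Q u v), p.comp (.nil v) = p
  | _, _, .nil _ => rfl
  | _, _, .cons a p => congrArg (cons a) (comp_nil p)

theorem comp_assoc : ∀ {u v w z : Q.V} (p : Path Q u v) (q : Path Q v w) (r : Path Q w z),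
    (p.comp q).comp r = p.comp (q.comp r)
  | _, _, _, _, .nil _, _, _ => rfl
  | _, _, _, _, .cons a p, q, r => congrArg (cons a) (comp_assoc p q r)

@[simp] theorem arrows_nil (v : Q.V) : (nil v : Path Q v v).arrows = [] := rfl

@[simp] theorem arrows_cons (a : Q.A) {w : Q.V} (p : Path Q (Q.tgt a) w) :
    (cons a p).arrows = a :: p.arrows := rfl

@[simp] theorem arrows_comp : ∀ {u v w : Q.V} (p : Path Q u v) (q : Path Q v w),
    (p.comp q).arrows = p.arrows ++ q.arrows
  | _, _, _, .nil _, _ => rfl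
  | _, _, _, .cons a p, q => congrArg (a :: ·) (arrows_comp p q)

@[simp] theorem length_arrows : ∀ {u v : Q.V} (p : Path Q u v), p.arrows.length = p.length
  | _, _, .nil _ => rfl
  | _, _, .cons _ p => congrArg (· + 1) (length_arrows p)

@[simp] theorem length_comp {u v w : Q.V} (p : Path Q u v) (q : Path Q v w) :
    (p.comp q).length = p.length + q.length := by
  simp [← length_arrows]

@[simp] theorem arrows_cast {u u' v v' : Q.V} (hu : u = u') (hv : v = v') (p : Path Q u v) :
    (p.cast hu hv).arrows = p.arrows := by
  subst hu hv; rfl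

theorem arrows_comp2 (a b : Q.A) (h : Q.src b = Q.tgt a) : (comp2 a b h).arrows = [a, b] := by
  simp [comp2, arrow]

theorem pow_succ' {x : Q.V} (c : Path Q x x) : ∀ n, c.pow (n + 1) = (c.pow n).comp c
  | 0 => by simp [pow]
  | n + 1 => by
    calc c.pow (n + 2) = c.comp ((c.pow n).comp c) := by rw [← pow_succ' c n]; rfl
      _ = (c.pow (n + 1)).comp c := (comp_assoc _ _ _).symm

@[simp] theorem length_pow {x : Q.V} (c : Path Q x x) : ∀ n, (c.pow n).length = n * c.length
  | 0 => by simp [pow, length]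
  | n + 1 => by rw [pow, length_comp, length_pow c n]; ring

theorem mem_arrows_of_mem_arrows_pow {x : Q.V} (c : Path Q x x) {e : Q.A} :
    ∀ {n}, e ∈ (c.pow n).arrows → e ∈ c.arrows
  | 0, h => by simp [pow] at h
  | n + 1, h => by
    rw [pow, arrows_comp, List.mem_append] at h
    exact h.elim id (mem_arrows_of_mem_arrows_pow c)

theorem src_eq_of_head?_eq : ∀ {u v : Q.V} (p : Path Q u v) {b : Q.A},
    p.arrows.head? = some b → Q.src b = u
  | _, _, .nil _, _, h => by simp at h
  | _, _, .cons _ _, _, h => by cases h; rfl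

theorem length_ne_zero_of_ne {u v : Q.V} (p : Path Q u v) (h : u ≠ v) : p.length ≠ 0 := by
  cases p with
  | nil => exact absurd rfl h
  | cons => simp [length]

theorem exists_head?_eq_some {u v : Q.V} (p : Path Q u v) (h : p.length ≠ 0) :
    ∃ b, p.arrows.head? = some b := by
  cases p with
  | nil => exact absurd rfl h
  | cons a _ => exact ⟨a, rfl⟩

theorem head?_arrows_comp {u v w : Q.V} (p : Path Q u v) (q : Path Q v w) (h : p.length ≠ 0) :
    (p.comp q).arrows.head? = p.arrows.head? := by
  rw [arrows_comp]
  exact List.head?_append_of_ne_nil _ (by simpa [← List.length_pos_iff, pos_iff_ne_zero])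

theorem head?_arrows_pow_succ {x : Q.V} (c : Path Q x x) (hc : c.length ≠ 0) (n : ℕ) :
    (c.pow (n + 1)).arrows.head? = c.arrows.head? :=
  head?_arrows_comp c _ hc

theorem heq_of_arrows_eq {x y x' y' : Q.V} (p : Path Q x y) (q : Path Q x' y') (hx : x = x')
    (h : p.arrows = q.arrows) : y = y' ∧ HEq p q := by
  induction p generalizing x' y' with
  | nil =>
    cases q with
    | nil => subst hx; exact ⟨rfl, HEq.rfl⟩
    | cons => simp at h
  | cons a p ih =>
    cases q with
    | nil => simp at h
    | cons b q =>
      obtain ⟨rfl, h⟩ := List.cons_eq_cons.1 h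
      obtain ⟨rfl, hpq⟩ := ih q rfl h
      cases hpq
      exact ⟨rfl, HEq.rfl⟩

theorem eq_nil_of_length_eq_zero {x : Q.V} (p : Path Q x x) (h : p.length = 0) : p = nil x :=
  eq_of_heq (heq_of_arrows_eq (nil x) p rfl (by simp [List.eq_nil_iff_length_eq_zero, h])).2.symm

theorem exists_eq_comp_of_arrows_eq_append : ∀ {x y : Q.V} (p : Path Q x y) (l₁ l₂ : List Q.A),
    p.arrows = l₁ ++ l₂ →
      ∃ (m : Q.V) (s : Path Q x m) (t : Path Q m y), p = s.comp t ∧ s.arrows = l₁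
  | _, _, p, [], _, _ => ⟨_, nil _, p, rfl, rfl⟩
  | _, _, .nil _, _ :: _, _, h => by simp at h
  | _, _, .cons a p, b :: l₁, l₂, h => by
    rw [arrows_cons, List.cons_append, List.cons_eq_cons] at h
    obtain ⟨rfl, h⟩ := h
    obtain ⟨m, s, t, rfl, hs⟩ := exists_eq_comp_of_arrows_eq_append p l₁ l₂ h
    exact ⟨m, cons a s, t, rfl, by simp [hs]⟩

theorem exists_eq_comp_of_arrows_prefix {x y₁ y₂ : Q.V} (p : Path Q x y₁) (q : Path Q x y₂)
    (h : p.arrows <+: q.arrows) : ∃ r : Path Q y₁ y₂, q = p.comp r := by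
  obtain ⟨l, hl⟩ := h
  obtain ⟨m, s, t, rfl, hs⟩ := exists_eq_comp_of_arrows_eq_append q _ _ hl.symm
  obtain ⟨rfl, hsp⟩ := heq_of_arrows_eq p s rfl hs.symm
  exact ⟨t, by rw [eq_of_heq hsp]⟩

theorem isChain_arrows_pow {R : Q.A → Q.A → Prop} {x : Q.V} {c : Path Q x x}
    (hchain : c.arrows.IsChain R)
    (hwrap : ∀ ℓ ∈ c.arrows.getLast?, ∀ α ∈ c.arrows.head?, R ℓ α) :
    ∀ n, (c.pow n).arrows.IsChain R
  | 0 => by simp [pow]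
  | n + 1 => by
    rw [pow, arrows_comp]
    refine hchain.append (isChain_arrows_pow hchain hwrap n) fun ℓ hℓ α hα => hwrap ℓ hℓ α ?_
    cases n with
    | zero => simp [pow] at hα
    | succ n =>
      have hc : c.length ≠ 0 := by
        rintro h
        rw [eq_nil_of_length_eq_zero c h] at hℓ
        simp at hℓ
      rwa [head?_arrows_pow_succ c hc] at hα

theorem subset_arrows_of_isChain_of_head?_eq {R : Q.A → Q.A → Prop} (hR : Relator.RightUnique R)
    {x : Q.V} {c : Path Q x x} (hc : c.length ≠ 0) (hpow : ∀ n, (c.pow n).arrows.IsChain R)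
    {l : List Q.A} (hl : l.IsChain R) (hhead : l.head? = c.arrows.head?) : l ⊆ c.arrows := by
  have hpre : l <+: (c.pow (l.length + 1)).arrows := by
    refine hl.prefix_of_head?_eq hR (hpow _) (by rw [head?_arrows_pow_succ c hc, hhead]) ?_
    simp only [length_arrows, length_pow]
    nlinarith [Nat.pos_of_ne_zero hc]
  exact fun e he => mem_arrows_of_mem_arrows_pow c (hpre.subset he)

theorem subset_arrows_of_isChain_of_getLast?_eq {R : Q.A → Q.A → Prop}
    (hR : Relator.LeftUnique R) {x : Q.V} {c : Path Q x x} (hpow : ∀ n, (c.pow n).arrows.IsChain R)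
    {l : List Q.A} (hl : l.IsChain R) {e : Q.A} (hlast : l.getLast? = some e)
    (he : e ∈ c.arrows) : l ⊆ c.arrows := by
  obtain ⟨s, t, hst⟩ := List.append_of_mem he
  set W := (c.pow l.length).arrows ++ (s ++ [e])
  have hW : W <+: (c.pow (l.length + 1)).arrows := by
    rw [pow_succ', arrows_comp, hst]
    exact (List.prefix_append_right_inj _).2 (by simp)
  have hc : 1 ≤ c.length := by
    rw [← length_arrows, hst]
    simp only [List.length_append, List.length_cons]
    omega
  have hsuf : l <:+ W := by
    refine hl.suffix_of_getLast?_eq hR ((hpow _).prefix hW) (by simp [W, hlast]) ?_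
    simp only [W, List.length_append, length_arrows, length_pow]
    nlinarith
  intro b hb
  rcases List.mem_append.1 (hsuf.subset hb) with h | h
  · exact mem_arrows_of_mem_arrows_pow c h
  · rw [hst]
    simp only [List.mem_append, List.mem_cons] at h ⊢
    tauto

end Path

section PathAlgebra

variable {k : Type} [Field k]

theorem lmul_eq_linearCombination {u v : Q.V} (t : Path Q u v) (z : PAlg k Q) :
    lmul k t z = Finsupp.linearCombination k
      (fun s : PathsSigma Q => if h : s.1 = v then pvec k (t.comp (s.2.2.cast h rfl)) else 0)
      z := by
  simp only [lmul, Finsupp.linearCombination_apply, smul_dite, smul_zero]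

theorem rmul_eq_linearCombination {u v : Q.V} (z : PAlg k Q) (t : Path Q u v) :
    rmul k z t = Finsupp.linearCombination k
      (fun s : PathsSigma Q => if h : s.2.1 = u then pvec k ((s.2.2.cast rfl h).comp t) else 0)
      z := by
  simp only [rmul, Finsupp.linearCombination_apply, smul_dite, smul_zero]

theorem lmul_pvec {u v w : Q.V} (p : Path Q u v) (q : Path Q v w) :
    lmul k p (pvec k q) = pvec k (p.comp q) := by
  rw [lmul_eq_linearCombination, pvec]
  erw [Finsupp.linearCombination_single, one_smul, dif_pos rfl]
  rfl

theorem rmul_pvec {u v w : Q.V} (p : Path Q u v) (q : Path Q v w) :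
    rmul k (pvec k p) q = pvec k (p.comp q) := by
  rw [rmul_eq_linearCombination, pvec]
  erw [Finsupp.linearCombination_single, one_smul, dif_pos rfl]
  rfl

theorem lmul_sub_smul {x y₁ y₂ z : Q.V} (t : Path Q z x) (p : Path Q x y₁) (q : Path Q x y₂)
    (c : k) : lmul k t (pvec k p - c • pvec k q) = pvec k (t.comp p) - c • pvec k (t.comp q) := by
  rw [lmul_eq_linearCombination, map_sub, map_smul, ← lmul_eq_linearCombination,
    ← lmul_eq_linearCombination, lmul_pvec, lmul_pvec]

theorem rmul_sub_smul {x₁ x₂ y z : Q.V} (p : Path Q x₁ y) (q : Path Q x₂ y) (t : Path Q y z)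
    (c : k) : rmul k (pvec k p - c • pvec k q) t = pvec k (p.comp t) - c • pvec k (q.comp t) := by
  rw [rmul_eq_linearCombination, map_sub, map_smul, ← rmul_eq_linearCombination,
    ← rmul_eq_linearCombination, rmul_pvec, rmul_pvec]

end PathAlgebra

namespace AdmissibleIdeal

variable {k : Type} [Field k] (J : AdmissibleIdeal k Q)

theorem pvec_comp_mem {u v w : Q.V} {p : Path Q u v} (hp : pvec k p ∈ J.I) (q : Path Q v w) :
    pvec k (p.comp q) ∈ J.I := by
  rw [← rmul_pvec]
  exact J.rmul_mem q hp

theorem pvec_not_mem_of_comp {u v w : Q.V} (p : Path Q u v) {q : Path Q v w}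
    (h : pvec k (p.comp q) ∉ J.I) : pvec k q ∉ J.I := by
  rw [← lmul_pvec] at h
  exact fun hq => h (J.lmul_mem p hq)

theorem sub_inv_smul_mem {x y : Q.V} {u v : Path Q x y} {c : k} (hc : c ≠ 0)
    (h : pvec k u - c • pvec k v ∈ J.I) : pvec k v - c⁻¹ • pvec k u ∈ J.I := by
  convert J.I.smul_mem (-c⁻¹) h using 1
  rw [smul_sub, smul_smul, neg_mul, inv_mul_cancel₀ hc]
  module

theorem sub_pow_smul_mem {x y : Q.V} {u : Path Q x y} {w : Path Q x x} {r : Path Q y y} {c : k}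
    (h : pvec k u - c • pvec k (w.comp (u.comp r)) ∈ J.I) (n : ℕ) :
    pvec k u - c ^ n • pvec k ((w.pow n).comp (u.comp (r.pow n))) ∈ J.I := by
  induction n with
  | zero => simp [Path.pow]
  | succ n ih =>
    have step := J.lmul_mem (w.pow n) (J.rmul_mem (r.pow n) h)
    rw [rmul_sub_smul, lmul_sub_smul] at step
    have hpath : (w.pow n).comp ((w.comp (u.comp r)).comp (r.pow n))
        = (w.pow (n + 1)).comp (u.comp (r.pow (n + 1))) := by
      rw [Path.pow_succ', Path.pow]
      simp only [Path.comp_assoc]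
    rw [hpath] at step
    convert J.I.add_mem ih (J.I.smul_mem (c ^ n) step) using 1
    rw [_root_.pow_succ]
    module

theorem comp_comp_eq_of_sub_smul_mem {x y : Q.V} {u : Path Q x y} {w : Path Q x x}
    {r : Path Q y y} {c : k} (hu : pvec k u ∉ J.I)
    (h : pvec k u - c • pvec k (w.comp (u.comp r)) ∈ J.I) : w.comp (u.comp r) = u := by
  by_cases hwr : w.length = 0 ∧ r.length = 0
  · rw [Path.eq_nil_of_length_eq_zero w hwr.1, Path.eq_nil_of_length_eq_zero r hwr.2]
    simp
  refine absurd ?_ hu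
  have hlong : pvec k ((w.pow J.bound).comp (u.comp (r.pow J.bound))) ∈ J.I := by
    refine J.pow_le _ ?_
    simp only [Path.length_comp, Path.length_pow]
    have hpos : 1 ≤ w.length + r.length := by omega
    nlinarith
  simpa using J.I.add_mem (J.sub_pow_smul_mem h J.bound) (J.I.smul_mem (c ^ J.bound) hlong)

theorem ne_comp_comp_of_sub_smul_mem {x y : Q.V} {u v : Path Q x y} {c : k}
    (hu : pvec k u ∉ J.I) (huv : u ≠ v) (h : pvec k u - c • pvec k v ∈ J.I)
    (w : Path Q x x) (r : Path Q y y) : v ≠ w.comp (u.comp r) := by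
  rintro rfl
  exact huv (J.comp_comp_eq_of_sub_smul_mem hu h).symm

end AdmissibleIdeal

section GoodPair

variable {k : Type} [Field k]

def GoodPair (J : AdmissibleIdeal k Q) (a b : Q.A) : Prop :=
  ∃ h : Q.src b = Q.tgt a, pvec k (comp2 a b h) ∉ J.I

theorem isChain_goodPair_arrows (J : AdmissibleIdeal k Q) : ∀ {u v : Q.V} (p : Path Q u v),
    pvec k p ∉ J.I → p.arrows.IsChain (GoodPair J)
  | _, _, .nil _, _ => .nil
  | _, _, .cons a q, hp => by
    rw [Path.arrows_cons, List.isChain_cons]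
    refine ⟨fun b hb => ?_, isChain_goodPair_arrows J q (J.pvec_not_mem_of_comp (arrow Q a) hp)⟩
    have hsrc : Q.src b = Q.tgt a := Path.src_eq_of_head?_eq q hb
    refine ⟨hsrc, fun hab => hp ?_⟩
    obtain ⟨t, ht⟩ := List.head?_eq_some_iff.1 hb
    obtain ⟨r, hr⟩ := Path.exists_eq_comp_of_arrows_prefix (comp2 a b hsrc) (.cons a q)
      (by simp [Path.arrows_comp2, ht])
    rw [hr]
    exact J.pvec_comp_mem hab r

namespace SpecialBiserial

theorem eq_or_eq_of_src_eq (SB : SpecialBiserial k Q) {α β ζ : Q.A} (hαβ : α ≠ β)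
    (hβ : Q.src β = Q.src α) (hζ : Q.src ζ = Q.src α) : ζ = α ∨ ζ = β := by
  by_contra! hne
  have hcard : ({⟨α, rfl⟩, ⟨β, hβ⟩, ⟨ζ, hζ⟩} : Finset {e : Q.A // Q.src e = Q.src α}).card ≤ 2 :=
    (Finset.card_le_univ _).trans (SB.src_card _)
  rw [Finset.card_insert_of_notMem (by simp [hαβ, hne.1.symm]),
    Finset.card_insert_of_notMem (by simp [hne.2.symm]), Finset.card_singleton] at hcard
  omega

variable (SB : SpecialBiserial k Q)

theorem rightUnique_goodPair : Relator.RightUnique (GoodPair SB.toAdmissibleIdeal) :=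
  fun a b c hb hc => SB.unique_succ a b c hb.1 hc.1 hb.2 hc.2

theorem leftUnique_goodPair : Relator.LeftUnique (GoodPair SB.toAdmissibleIdeal) :=
  fun a b c ha hb => SB.unique_pred c a b ha.1.symm hb.1.symm ha.2 hb.2

theorem exists_eq_comp_of_head?_eq {x y₁ y₂ : Q.V} {p : Path Q x y₁} {q : Path Q x y₂}
    (hp : pvec k p ∉ SB.I) (hq : pvec k q ∉ SB.I) (h : p.arrows.head? = q.arrows.head?)
    (hlen : p.length ≤ q.length) : ∃ r : Path Q y₁ y₂, q = p.comp r :=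
  Path.exists_eq_comp_of_arrows_prefix p q <|
    (isChain_goodPair_arrows _ p hp).prefix_of_head?_eq SB.rightUnique_goodPair
      (isChain_goodPair_arrows _ q hq) h (by simpa using hlen)

theorem head?_arrows_ne {x y : Q.V} {u v : Path Q x y} {c : k} (hc : c ≠ 0) (huv : u ≠ v)
    (hu : pvec k u ∉ SB.I) (hv : pvec k v ∉ SB.I) (hrel : pvec k u - c • pvec k v ∈ SB.I) :
    u.arrows.head? ≠ v.arrows.head? := by
  intro h
  rcases le_total u.length v.length with hle | hle
  · obtain ⟨r, hr⟩ := SB.exists_eq_comp_of_head?_eq hu hv h hle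
    exact SB.ne_comp_comp_of_sub_smul_mem hu huv hrel (.nil x) r hr
  · obtain ⟨r, hr⟩ := SB.exists_eq_comp_of_head?_eq hv hu h.symm hle
    exact SB.ne_comp_comp_of_sub_smul_mem hv huv.symm (SB.sub_inv_smul_mem hc hrel) (.nil x) r hr

theorem head?_arrows_eq_of_isSimpleCycle {x y : Q.V} {a : Path Q x x} (ha : IsSimpleCycle a)
    {p v : Path Q x y} (hu : pvec k (a.comp p) ∉ SB.I) (hv : pvec k v ∉ SB.I)
    (hp : p.arrows.head? = a.arrows.head?) {e : Q.A} (heu : e ∈ (a.comp p).arrows)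
    (hev : e ∈ v.arrows) : v.arrows.head? = a.arrows.head? := by
  have hGu := isChain_goodPair_arrows _ _ hu
  have hpow : ∀ n, (a.pow n).arrows.IsChain (GoodPair SB.toAdmissibleIdeal) := by
    rw [Path.arrows_comp, List.isChain_append] at hGu
    exact Path.isChain_arrows_pow hGu.1 fun ℓ hℓ α hα => hGu.2.2 ℓ hℓ α (hp ▸ hα)
  have hea : e ∈ a.arrows := Path.subset_arrows_of_isChain_of_head?_eq SB.rightUnique_goodPair
    ha.1 hpow hGu (Path.head?_arrows_comp a p ha.1) heu
  obtain ⟨l, l', hl⟩ := List.append_of_mem hev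
  have hGl : (l ++ [e]).IsChain (GoodPair SB.toAdmissibleIdeal) :=
    (isChain_goodPair_arrows _ _ hv).prefix ⟨l', by simp [hl]⟩
  have hla := Path.subset_arrows_of_isChain_of_getLast?_eq SB.leftUnique_goodPair hpow hGl
    (by simp) hea
  obtain ⟨α, hα⟩ := Path.exists_head?_eq_some a ha.1
  obtain ⟨β, hβ⟩ := Path.exists_head?_eq_some v (by simp [← Path.length_arrows, hl])
  have hβl : (l ++ [e]).head? = some β := by
    rw [hl] at hβ
    cases l <;> simpa using hβ
  have hsrc : Q.src β = Q.src α :=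
    (Path.src_eq_of_head?_eq v hβ).trans (Path.src_eq_of_head?_eq a hα).symm
  rw [hα, hβ, List.inj_on_of_nodup_map ha.2 (hla (List.mem_of_mem_head? hβl))
    (List.mem_of_mem_head? hα) hsrc]

end SpecialBiserial

end GoodPair

/-- if `u - λv ∈ I` is a binomial relation from `x` to `y` with `x ≠ y`,
`u` starts with a simple cycle `a` at `x`, and `u, v` share an arrow, then there are
a path `p : x → y` and a nontrivial cycle `b` at `y` with `u = ap` and `v = pb`. -/
theorem stmt2 {k : Type} [Field k] {Q : FQuiver} (SB : SpecialBiserial k Q)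
    {x y : Q.V} (hxy : x ≠ y)
    (a : Path Q x x) (ha : IsSimpleCycle a)
    (u v : Path Q x y) (c : k) (hc : c ≠ 0) (huv : u ≠ v)
    (hu : pvec k u ∉ SB.I) (hv : pvec k v ∉ SB.I)
    (hrel : pvec k u - c • pvec k v ∈ SB.I)
    (hstart : ∃ p : Path Q x y, u = a.comp p)
    (hshare : ∃ e : Q.A, e ∈ u.arrows ∧ e ∈ v.arrows) :
    ∃ (p : Path Q x y) (b : Path Q y y),
      b.length ≠ 0 ∧ u = a.comp p ∧ v = p.comp b := by
  obtain ⟨p, rfl⟩ := hstart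
  obtain ⟨e, heu, hev⟩ := hshare
  have hheads : a.arrows.head? ≠ v.arrows.head? := by
    rw [← Path.head?_arrows_comp a p ha.1]
    exact SB.head?_arrows_ne hc huv hu hv hrel
  have hvu : ∀ r : Path Q y y, a.comp (v.comp r) ≠ a.comp p := fun r =>
    (SB.ne_comp_comp_of_sub_smul_mem hv huv.symm (SB.sub_inv_smul_mem hc hrel) a r).symm
  obtain ⟨α, hα⟩ := Path.exists_head?_eq_some a ha.1
  obtain ⟨β, hβ⟩ := Path.exists_head?_eq_some v (Path.length_ne_zero_of_ne v hxy)
  obtain ⟨ζ, hζ⟩ := Path.exists_head?_eq_some p (Path.length_ne_zero_of_ne p hxy)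
  have hαx := Path.src_eq_of_head?_eq a hα
  rcases SB.eq_or_eq_of_src_eq (fun h => hheads (by rw [hα, hβ, h]))
    ((Path.src_eq_of_head?_eq v hβ).trans hαx.symm) ((Path.src_eq_of_head?_eq p hζ).trans hαx.symm)
    with rfl | rfl
  · exact absurd (SB.head?_arrows_eq_of_isSimpleCycle ha hu hv (hζ.trans hα.symm) heu hev).symm
      hheads
  have hp : pvec k p ∉ SB.I := SB.pvec_not_mem_of_comp a hu
  rcases le_total p.length v.length with hle | hle
  · obtain ⟨b, rfl⟩ := SB.exists_eq_comp_of_head?_eq hp hv (hζ.trans hβ.symm) hle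
    refine ⟨p, b, fun hb => ?_, rfl, rfl⟩
    rw [Path.eq_nil_of_length_eq_zero b hb] at hvu
    exact hvu (.nil y) (by simp)
  · obtain ⟨r, rfl⟩ := SB.exists_eq_comp_of_head?_eq hv hp (hβ.trans hζ.symm) hle
    exact (hvu r rfl).elim

end FQuiver
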